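/- Let f be a bounded holomorphic function on the right half-plane H with asymptotic expansion ∑_{j=0}^∞ c_j e^{-λ_j z}, and set f_n(z) = f(z) - ∑_{j=0}^n c_j e^{-λ_j z}. Then |f_n(z)| ≤ M_n e^{-λ_{n+1} Re z} on H, where M_n is the supremum of the non-tangential boundary values |f_n*(iy)| over y ∈ ℝ. -/

import Mathlib

/-!
Multiplying the remainder `f_N` by `e^{λ_{N+1} z}` gives a function `g` that is still bounded on
`H`: far to the right the next term of the expansion controls it, and elsewhere `f_N` is bounded.
On the imaginary axis `|g|` has the same non-tangential boundary values as `|f_N|`, so it suffices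
to show that a bounded holomorphic function on `H` whose non-tangential boundary values are
bounded by `M` is bounded by `M`. Pulling back by a Möbius map of the unit disc onto `H` that sends
`0` to the given point turns non-tangential limits into radial limits, and the bound follows from
the mean value property on circles of radius `r → 1` together with dominated convergence.
-/

open Filter Complex

/-- `∑_j c j e^{-lam j z}` is an asymptotic expansion of `f` on the right half-plane,
for a strictly increasing sequence of levels `0 = lam 0 < lam 1 < ⋯ → ∞`. -/
def HasHolAsymExp (f : ℂ → ℂ) (lam : ℕ → ℝ) (c : ℕ → ℂ) : Prop :=
  lam 0 = 0 ∧ StrictMono lam ∧ Filter.Tendsto lam Filter.atTop Filter.atTop ∧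
    ∀ N : ℕ, Filter.Tendsto
      (fun z : ℂ => ‖f z - ∑ j ∈ Finset.range (N + 1), c j * Complex.exp (-(lam j : ℂ) * z)‖ *
        Real.exp (lam N * z.re))
      (Filter.comap Complex.re Filter.atTop) (nhds 0)

open ComplexConjugate Metric Set Topology Real

theorem norm_circleAverage_le_circleAverage_norm {E : Type*} [NormedAddCommGroup E]
    [NormedSpace ℝ E] {f : ℂ → E} {c : ℂ} {R : ℝ} :
    ‖circleAverage f c R‖ ≤ circleAverage (fun z => ‖f z‖) c R := by
  rw [circleAverage, circleAverage, norm_smul, smul_eq_mul, Real.norm_of_nonneg (by positivity)]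
  gcongr
  exact intervalIntegral.norm_integral_le_integral_norm two_pi_pos.le

theorem norm_le_of_radial_limits {E : Type*} [NormedAddCommGroup E] [NormedSpace ℂ E]
    [CompleteSpace E] {G : ℂ → E} {B M : ℝ}
    (hG : DifferentiableOn ℂ G (ball 0 1)) (hB : ∀ w ∈ ball (0 : ℂ) 1, ‖G w‖ ≤ B)
    (hrad : ∀ᵐ θ : ℝ, ∃ L, ‖L‖ ≤ M ∧
      Tendsto (fun r : ℝ => G (circleMap 0 r θ)) (𝓝[<] 1) (𝓝 L)) :
    ‖G 0‖ ≤ M := by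
  -- Working with the excess `(‖G‖ - M)⁺`, whose radial limits vanish a.e., dominated convergence
  -- applies without knowing that the boundary function is measurable.
  set excess : ℂ → ℝ := fun w => max (‖G w‖ - M) 0
  have hball : ∀ r ∈ Ioo (0 : ℝ) 1, closedBall (0 : ℂ) |r| ⊆ ball 0 1 := fun r hr =>
    closedBall_subset_ball (by rw [abs_of_pos hr.1]; exact hr.2)
  have hcircle : ∀ r ∈ Ioo (0 : ℝ) 1, ∀ θ, circleMap 0 r θ ∈ ball (0 : ℂ) 1 := fun r hr θ =>
    hball r hr (sphere_subset_closedBall (circleMap_mem_sphere' 0 r θ))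
  have hexcess_cont : ∀ r ∈ Ioo (0 : ℝ) 1, ContinuousOn excess (closedBall 0 |r|) := by
    intro r hr
    have := hG.continuousOn.mono (hball r hr)
    fun_prop
  have hmean : ∀ r ∈ Ioo (0 : ℝ) 1, ‖G 0‖ - M ≤ circleAverage excess 0 r := by
    intro r hr
    have hnorm : CircleIntegrable (fun w => ‖G w‖) 0 r :=
      ((hG.continuousOn.mono (hball r hr)).norm.mono sphere_subset_closedBall).circleIntegrable'
    have hM : CircleIntegrable (fun _ => M) 0 r := circleIntegrable_const M 0 r
    calc ‖G 0‖ - M = ‖circleAverage G 0 r‖ - circleAverage (fun _ => M) 0 r := by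
          rw [(hG.diffContOnCl_ball (hball r hr)).circleAverage, circleAverage_const]
      _ ≤ circleAverage (fun w => ‖G w‖) 0 r - circleAverage (fun _ => M) 0 r := by
        gcongr; exact norm_circleAverage_le_circleAverage_norm
      _ = circleAverage (fun w => ‖G w‖ - M) 0 r := (circleAverage_fun_sub hnorm hM).symm
      _ ≤ circleAverage excess 0 r :=
        circleAverage_mono (hnorm.sub hM)
          ((hexcess_cont r hr).mono sphere_subset_closedBall).circleIntegrable'
          fun _ _ => le_max_left _ _
  have hlim : Tendsto (fun r => circleAverage excess 0 r) (𝓝[<] 1) (𝓝 0) := by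
    have hdct : Tendsto (fun r => ∫ θ in 0..2 * π, excess (circleMap 0 r θ)) (𝓝[<] 1)
        (𝓝 (∫ _ in 0..2 * π, (0 : ℝ))) := by
      refine intervalIntegral.tendsto_integral_filter_of_dominated_convergence
        (fun _ => max (B - M) 0) ?_ ?_ intervalIntegrable_const ?_
      · filter_upwards [Ioo_mem_nhdsLT one_pos] with r hr
        exact ((hexcess_cont r hr).comp_continuous (continuous_circleMap 0 r)
          fun θ => sphere_subset_closedBall (circleMap_mem_sphere' 0 r θ)).aestronglyMeasurable
      · filter_upwards [Ioo_mem_nhdsLT one_pos] with r hr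
        refine MeasureTheory.ae_of_all _ fun θ _ => ?_
        rw [Real.norm_of_nonneg (le_max_right _ _)]
        exact max_le_max_right 0 (sub_le_sub_right (hB _ (hcircle r hr θ)) M)
      · filter_upwards [hrad] with θ ⟨L, hLM, hL⟩ _
        have := (hL.norm.sub_const M).max (tendsto_const_nhds (x := (0 : ℝ)))
        rwa [max_eq_right (sub_nonpos.2 hLM)] at this
    simpa [circleAverage] using hdct.const_smul (2 * π)⁻¹
  have := ge_of_tendsto hlim (by filter_upwards [Ioo_mem_nhdsLT one_pos] using hmean)
  linarith

def halfPlaneCone (y κ : ℝ) : Set ℂ := {z | 0 < z.re ∧ ‖z - y * I‖ < κ * z.re}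

theorem halfPlaneCone_neBot (y : ℝ) {κ : ℝ} (hκ : 1 < κ) :
    (𝓝[halfPlaneCone y κ] ((y : ℂ) * I)).NeBot := by
  rw [← mem_closure_iff_nhdsWithin_neBot]
  have hpath : Tendsto (fun t : ℝ => (y : ℂ) * I + t) (𝓝[>] 0) (𝓝 ((y : ℂ) * I)) := by
    have : Continuous (fun t : ℝ => (y : ℂ) * I + t) := by fun_prop
    simpa using (this.tendsto 0).mono_left nhdsWithin_le_nhds
  refine mem_closure_of_tendsto hpath ?_
  filter_upwards [self_mem_nhdsWithin] with t (ht : 0 < t)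
  refine ⟨by simpa using ht, ?_⟩
  simp [abs_of_pos ht]
  nlinarith

theorem norm_le_of_tendsto_halfPlaneCone {E : Type*} [NormedAddCommGroup E] {g : ℂ → E}
    {B y κ : ℝ} {L : E} (hκ : 1 < κ) (hB : ∀ z : ℂ, 0 < z.re → ‖g z‖ ≤ B)
    (h : Tendsto g (𝓝[halfPlaneCone y κ] (y * I)) (𝓝 L)) : ‖L‖ ≤ B :=
  haveI := halfPlaneCone_neBot y hκ
  le_of_tendsto h.norm (eventually_nhdsWithin_of_forall fun z hz => hB z hz.1)

/-- The Möbius map of the unit disc onto the right half-plane with `0 ↦ z₀`; it sends the unit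
circle minus `1` onto the imaginary axis. -/
noncomputable def cayleyToHalfPlane (z₀ w : ℂ) : ℂ := (z₀ + conj z₀ * w) / (1 - w)

section

variable {z₀ : ℂ}

theorem cayleyToHalfPlane_zero : cayleyToHalfPlane z₀ 0 = z₀ := by simp [cayleyToHalfPlane]

theorem re_cayleyToHalfPlane (z₀ w : ℂ) :
    (cayleyToHalfPlane z₀ w).re = z₀.re * (1 - ‖w‖ ^ 2) / ‖1 - w‖ ^ 2 := by
  rw [cayleyToHalfPlane, div_re, ← normSq_eq_norm_sq, ← normSq_eq_norm_sq, normSq_apply w]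
  simp only [add_re, add_im, mul_re, mul_im, conj_re, conj_im, sub_re, sub_im, one_re, one_im]
  ring

theorem cayleyToHalfPlane_sub_cayleyToHalfPlane {w₁ w₂ : ℂ} (h₁ : w₁ ≠ 1) (h₂ : w₂ ≠ 1) :
    cayleyToHalfPlane z₀ w₁ - cayleyToHalfPlane z₀ w₂
      = 2 * z₀.re * (w₁ - w₂) / ((1 - w₁) * (1 - w₂)) := by
  have h₁' : 1 - w₁ ≠ 0 := sub_ne_zero.2 h₁.symm
  have h₂' : 1 - w₂ ≠ 0 := sub_ne_zero.2 h₂.symm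
  rw [cayleyToHalfPlane, cayleyToHalfPlane, div_sub_div _ _ h₁' h₂', re_eq_add_conj]
  field_simp
  ring

theorem differentiableOn_cayleyToHalfPlane :
    DifferentiableOn ℂ (cayleyToHalfPlane z₀) (ball 0 1) := by
  intro w hw
  have : 1 - w ≠ 0 := sub_ne_zero.2 (by rintro rfl; simp at hw)
  unfold cayleyToHalfPlane
  fun_prop (disch := assumption)

theorem mapsTo_cayleyToHalfPlane (hz₀ : 0 < z₀.re) :
    MapsTo (cayleyToHalfPlane z₀) (ball 0 1) {z | 0 < z.re} := by
  intro w hw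
  have hw1 : ‖w‖ < 1 := mem_ball_zero_iff.1 hw
  have hw1' : 1 - w ≠ 0 := sub_ne_zero.2 (by rintro rfl; simp at hw1)
  have hw2 : 0 < 1 - ‖w‖ ^ 2 := by nlinarith [norm_nonneg w]
  show 0 < (cayleyToHalfPlane z₀ w).re
  rw [re_cayleyToHalfPlane]
  positivity

theorem re_cayleyToHalfPlane_of_norm_eq_one {ζ : ℂ} (hζ : ‖ζ‖ = 1) :
    (cayleyToHalfPlane z₀ ζ).re = 0 := by
  simp [re_cayleyToHalfPlane, hζ]

theorem tendsto_cayleyToHalfPlane_nhdsWithin_halfPlaneCone (hz₀ : 0 < z₀.re) {ζ : ℂ}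
    (hζ : ‖ζ‖ = 1) (hζ1 : ζ ≠ 1) {κ : ℝ} (hκ : 1 < κ) :
    Tendsto (fun r : ℝ => cayleyToHalfPlane z₀ (r * ζ)) (𝓝[<] 1)
      (𝓝[halfPlaneCone (cayleyToHalfPlane z₀ ζ).im κ]
        ((cayleyToHalfPlane z₀ ζ).im * I)) := by
  set p := cayleyToHalfPlane z₀ ζ
  have hp : ((p.im : ℂ) * I) = p := by
    apply Complex.ext <;> simp [p, re_cayleyToHalfPlane_of_norm_eq_one hζ]
  rw [hp]
  have hb : 0 < ‖1 - ζ‖ := norm_pos_iff.2 (sub_ne_zero.2 hζ1.symm)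
  have hcont : ContinuousAt (fun r : ℝ => cayleyToHalfPlane z₀ (r * ζ)) 1 := by
    have : 1 - (((1 : ℝ) : ℂ) * ζ) ≠ 0 := by simpa using sub_ne_zero.2 hζ1.symm
    unfold cayleyToHalfPlane
    fun_prop (disch := assumption)
  -- After clearing denominators, `cayleyToHalfPlane z₀ (r * ζ)` lies in the cone iff this
  -- inequality holds; at `r = 1` it reads `2 ‖1 - ζ‖ < 2 κ ‖1 - ζ‖`.
  have hnear : ∀ᶠ r : ℝ in 𝓝 1, 2 * ‖1 - r * ζ‖ < κ * (1 + r) * ‖1 - ζ‖ := by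
    refine ContinuousAt.eventually_lt (by fun_prop) (by fun_prop) ?_
    simp only [ofReal_one, one_mul]
    nlinarith
  refine tendsto_nhdsWithin_iff.2 ⟨?_, ?_⟩
  · simpa [p] using hcont.tendsto.mono_left nhdsWithin_le_nhds
  filter_upwards [nhdsWithin_le_nhds hnear, Ioo_mem_nhdsLT one_pos] with r hr hr01
  have hrζ : ‖(r : ℂ) * ζ‖ = r := by simp [hζ, abs_of_pos hr01.1]
  have hrζ1 : (r : ℂ) * ζ ≠ 1 := fun h => by simp [h] at hrζ; linarith [hr01.2]
  have ha : 0 < ‖1 - r * ζ‖ := norm_pos_iff.2 (sub_ne_zero.2 hrζ1.symm)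
  have hdist : ‖cayleyToHalfPlane z₀ (r * ζ) - p‖
      = 2 * z₀.re * (1 - r) / (‖1 - r * ζ‖ * ‖1 - ζ‖) := by
    have hnum : 2 * (z₀.re : ℂ) * (r * ζ - ζ) = ((2 * z₀.re * (1 - r) : ℝ) : ℂ) * (-ζ) := by
      push_cast; ring
    rw [show p = cayleyToHalfPlane z₀ ζ from rfl, cayleyToHalfPlane_sub_cayleyToHalfPlane hrζ1 hζ1,
      hnum, norm_div, norm_mul, norm_mul, norm_neg, hζ, norm_real,
      norm_of_nonneg (by nlinarith [hr01.2]), mul_one]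
  refine ⟨mapsTo_cayleyToHalfPlane hz₀ (mem_ball_zero_iff.2 (hrζ.trans_lt hr01.2)), ?_⟩
  rw [hp, hdist, re_cayleyToHalfPlane, hrζ, mul_div_assoc',
    div_lt_div_iff₀ (by positivity) (by positivity)]
  have h1r : 0 < 1 - r := sub_pos.2 hr01.2
  have := mul_lt_mul_of_pos_left hr (by positivity : 0 < z₀.re * (1 - r) * ‖1 - r * ζ‖)
  nlinarith

end

theorem ae_exp_mul_I_ne_one : ∀ᵐ θ : ℝ, cexp (θ * I) ≠ 1 := by
  have hcount : {θ : ℝ | cexp (θ * I) = 1}.Countable := by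
    refine (countable_range fun n : ℤ => n * (2 * π)).mono fun θ hθ => ?_
    obtain ⟨n, hn⟩ := exp_eq_one_iff.1 hθ
    have : (θ : ℂ) = ((n * (2 * π) : ℝ) : ℂ) :=
      mul_right_cancel₀ I_ne_zero (by rw [hn]; push_cast; ring)
    exact ⟨n, by exact_mod_cast this.symm⟩
  exact MeasureTheory.measure_eq_zero_iff_ae_notMem.1 (hcount.measure_zero _)

theorem norm_le_of_nonTangential_limits {E : Type*} [NormedAddCommGroup E] [NormedSpace ℂ E]
    [CompleteSpace E] {g : ℂ → E} {B M κ : ℝ} (hκ : 1 < κ)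
    (hg : DifferentiableOn ℂ g {z | 0 < z.re}) (hB : ∀ z : ℂ, 0 < z.re → ‖g z‖ ≤ B)
    (hlim : ∀ y : ℝ, ∃ L, ‖L‖ ≤ M ∧ Tendsto g (𝓝[halfPlaneCone y κ] (y * I)) (𝓝 L))
    {z : ℂ} (hz : 0 < z.re) : ‖g z‖ ≤ M := by
  rw [← cayleyToHalfPlane_zero (z₀ := z)]
  refine norm_le_of_radial_limits (hg.comp differentiableOn_cayleyToHalfPlane
    (mapsTo_cayleyToHalfPlane hz)) (fun w hw => hB _ (mapsTo_cayleyToHalfPlane hz hw)) ?_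
  filter_upwards [ae_exp_mul_I_ne_one] with θ hθ
  obtain ⟨L, hLM, hL⟩ := hlim (cayleyToHalfPlane z (cexp (θ * I))).im
  refine ⟨L, hLM, ?_⟩
  simp only [circleMap_zero, Function.comp_def]
  exact hL.comp
    (tendsto_cayleyToHalfPlane_nhdsWithin_halfPlaneCone hz (norm_exp_ofReal_mul_I θ) hθ hκ)

noncomputable def partialExpSum (c : ℕ → ℂ) (lam : ℕ → ℝ) (N : ℕ) (z : ℂ) : ℂ :=
  ∑ j ∈ Finset.range (N + 1), c j * cexp (-(lam j : ℂ) * z)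

theorem differentiable_partialExpSum (c : ℕ → ℂ) (lam : ℕ → ℝ) (N : ℕ) :
    Differentiable ℂ (partialExpSum c lam N) := by
  unfold partialExpSum
  fun_prop

theorem norm_partialExpSum_le {c : ℕ → ℂ} {lam : ℕ → ℝ} (hlam : ∀ j, 0 ≤ lam j) (N : ℕ)
    {z : ℂ} (hz : 0 ≤ z.re) : ‖partialExpSum c lam N z‖ ≤ ∑ j ∈ Finset.range (N + 1), ‖c j‖ := by
  refine (norm_sum_le _ _).trans (Finset.sum_le_sum fun j _ => ?_)
  rw [norm_mul]
  refine mul_le_of_le_one_right (norm_nonneg _) ?_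
  simpa [norm_exp] using mul_nonneg (hlam j) hz

namespace HasHolAsymExp

variable {f : ℂ → ℂ} {lam : ℕ → ℝ} {c : ℕ → ℂ}

theorem nonneg (h : HasHolAsymExp f lam c) (j : ℕ) : 0 ≤ lam j :=
  h.1 ▸ h.2.1.monotone (Nat.zero_le j)

theorem norm_remainder_le (h : HasHolAsymExp f lam c) {C : ℝ}
    (hC : ∀ z : ℂ, 0 < z.re → ‖f z‖ ≤ C) (N : ℕ) (z : ℂ) (hz : 0 < z.re) :
    ‖f z - partialExpSum c lam N z‖ ≤ C + ∑ j ∈ Finset.range (N + 1), ‖c j‖ :=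
  (norm_sub_le _ _).trans (add_le_add (hC z hz) (norm_partialExpSum_le h.nonneg N hz.le))

theorem exists_bound_remainder_mul_exp (h : HasHolAsymExp f lam c) {C : ℝ}
    (hC : ∀ z : ℂ, 0 < z.re → ‖f z‖ ≤ C) (N : ℕ) :
    ∃ B, ∀ z : ℂ, 0 < z.re →
      ‖(f z - partialExpSum c lam N z) * cexp (lam (N + 1) * z)‖ ≤ B := by
  obtain ⟨R, hR⟩ : ∃ R, ∀ z : ℂ, R ≤ z.re →
      ‖f z - partialExpSum c lam (N + 1) z‖ * Real.exp (lam (N + 1) * z.re) < 1 := by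
    have := (h.2.2.2 (N + 1)).eventually_lt_const one_pos
    obtain ⟨R, hR⟩ := eventually_atTop.1 (eventually_comap.1 this)
    exact ⟨R, fun z hz => hR z.re hz z rfl⟩
  set B₀ := C + ∑ j ∈ Finset.range (N + 1), ‖c j‖
  refine ⟨max (B₀ * Real.exp (lam (N + 1) * R)) (1 + ‖c (N + 1)‖), fun z hz => ?_⟩
  rw [norm_mul, norm_exp, re_ofReal_mul]
  rcases le_or_gt R z.re with hzR | hzR
  · have hsplit : f z - partialExpSum c lam N z = (f z - partialExpSum c lam (N + 1) z)
        + c (N + 1) * cexp (-(lam (N + 1) : ℂ) * z) := by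
      rw [partialExpSum, partialExpSum, Finset.sum_range_succ _ (N + 1)]; ring
    have hexp : ‖c (N + 1) * cexp (-(lam (N + 1) : ℂ) * z)‖ * Real.exp (lam (N + 1) * z.re)
        = ‖c (N + 1)‖ := by
      rw [norm_mul, mul_assoc, norm_exp, neg_mul, neg_re, re_ofReal_mul, ← Real.exp_add,
        neg_add_cancel, Real.exp_zero, mul_one]
    calc ‖f z - partialExpSum c lam N z‖ * Real.exp (lam (N + 1) * z.re)
        ≤ ‖f z - partialExpSum c lam (N + 1) z‖ * Real.exp (lam (N + 1) * z.re)
          + ‖c (N + 1) * cexp (-(lam (N + 1) : ℂ) * z)‖ * Real.exp (lam (N + 1) * z.re) := by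
          rw [hsplit, ← add_mul]; gcongr; exact norm_add_le _ _
      _ ≤ 1 + ‖c (N + 1)‖ := by rw [hexp]; linarith [hR z hzR]
      _ ≤ _ := le_max_right _ _
  · have hB₀ : ‖f z - partialExpSum c lam N z‖ ≤ B₀ := h.norm_remainder_le hC N z hz
    calc ‖f z - partialExpSum c lam N z‖ * Real.exp (lam (N + 1) * z.re)
        ≤ B₀ * Real.exp (lam (N + 1) * R) := by
          gcongr
          · exact (norm_nonneg _).trans hB₀
          · exact h.nonneg _
      _ ≤ _ := le_max_left _ _

end HasHolAsymExp

/-- **Estimate of the remainders of an asymptotic expansion.** If `f` is bounded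
holomorphic on `H = {Re z > 0}` with asymptotic expansion `∑ c j e^{-lam j z}`, and
`fstar N y` is the non-tangential boundary value at `i y` of the remainder
`f_N(z) = f(z) - ∑_{j ≤ N} c j e^{-lam j z}`, then
`|f_N(z)| ≤ (⨆ y, |fstar N y|) · e^{-lam (N+1) Re z}` on `H`. -/
theorem stmt_4 (f : ℂ → ℂ) (lam : ℕ → ℝ) (c : ℕ → ℂ) (fstar : ℕ → ℝ → ℂ)
    (hf : DifferentiableOn ℂ f {z : ℂ | 0 < z.re})
    (hbdd : ∃ C : ℝ, ∀ z : ℂ, 0 < z.re → ‖f z‖ ≤ C)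
    (hae : HasHolAsymExp f lam c)
    (hstar : ∀ N : ℕ, ∀ y : ℝ, ∀ κ : ℝ, 1 < κ →
      Filter.Tendsto
        (fun z : ℂ => f z - ∑ j ∈ Finset.range (N + 1), c j * Complex.exp (-(lam j : ℂ) * z))
        (nhdsWithin ((y : ℂ) * Complex.I)
          {z : ℂ | 0 < z.re ∧ ‖z - (y : ℂ) * Complex.I‖ < κ * z.re})
        (nhds (fstar N y))) :
    ∀ N : ℕ, ∀ z : ℂ, 0 < z.re →
      ‖f z - ∑ j ∈ Finset.range (N + 1), c j * Complex.exp (-(lam j : ℂ) * z)‖ ≤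
        (⨆ y : ℝ, ‖fstar N y‖) * Real.exp (-lam (N + 1) * z.re) := by
  obtain ⟨C, hC⟩ := hbdd
  intro N z hz
  have hboundary (y : ℝ) : Tendsto (fun z => f z - partialExpSum c lam N z)
      (𝓝[halfPlaneCone y 2] (y * I)) (𝓝 (fstar N y)) := hstar N y 2 one_lt_two
  have hsup (y : ℝ) : ‖fstar N y‖ ≤ ⨆ y, ‖fstar N y‖ :=
    le_ciSup ⟨_, forall_mem_range.2 fun y => norm_le_of_tendsto_halfPlaneCone one_lt_two
      (hae.norm_remainder_le hC N) (hboundary y)⟩ y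
  obtain ⟨B, hB⟩ := hae.exists_bound_remainder_mul_exp hC N
  have hexp : Continuous fun z : ℂ => cexp (lam (N + 1) * z) := by fun_prop
  have hg : DifferentiableOn ℂ
      (fun z => (f z - partialExpSum c lam N z) * cexp (lam (N + 1) * z)) {z | 0 < z.re} :=
    (hf.sub (differentiable_partialExpSum c lam N).differentiableOn).mul (by fun_prop)
  have hg_le := norm_le_of_nonTangential_limits one_lt_two hg hB (fun y =>
    ⟨fstar N y * cexp (lam (N + 1) * (y * I)), by simpa [norm_exp] using hsup y,
      (hboundary y).mul ((hexp.tendsto _).mono_left nhdsWithin_le_nhds)⟩) hz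
  rw [norm_mul, norm_exp, re_ofReal_mul] at hg_le
  calc ‖f z - partialExpSum c lam N z‖
      = ‖f z - partialExpSum c lam N z‖ * Real.exp (lam (N + 1) * z.re)
        * Real.exp (-lam (N + 1) * z.re) := by
        rw [mul_assoc, ← Real.exp_add, neg_mul, add_neg_cancel, Real.exp_zero, mul_one]
    _ ≤ _ := by gcongr
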